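/- arXiv:1111.5137 — 3 statements merged into one kernel-verified Lean document; each statement's English description precedes it below -/
import Mathlib

section
/- Let C₁ > 0, C₂ > 0 and l ≥ 1, and define Φ(x) = C₁·exp(C₂·x^l / l) for x ≥ 0 with fixed-point set S = {x ≥ 0 : x = Φ(x)}. If C₁ < (e·C₂)^{−1/l}, then S is nonempty and inf S < C₁·e^{1/l}. Consequently the sequence B₀ = 0, B_{n+1} = Φ(B_n) converges to a finite limit B_∞ satisfying B_∞ < C₁·e^{1/l}. -/
/-!
Write `M = C₁ e^{1/l}`. Since `M^l = e C₁^l`, the smallness condition says exactly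
`C₂ M^l < 1`, i.e. `Φ(M) < M`. As `Φ` is monotone on `[0, ∞)` and `0 < Φ(0)`, the iterates
from `0` increase and stay in `[0, M]`, so they converge; by continuity the limit is a fixed
point, and it is not `M` because `Φ(M) < M`.
-/

open Filter Function Set Topology Real

theorem monotone_iterate_of_monotoneOn_Icc {α : Type*} [Preorder α] {f : α → α} {a M : α}
    (hf : MonotoneOn f (Icc a M)) (hmaps : MapsTo f (Icc a M) (Icc a M)) (haM : a ≤ M)
    (ha : a ≤ f a) : Monotone fun n => f^[n] a := by
  refine monotone_nat_of_le_succ fun n => ?_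
  induction n with
  | zero => exact ha
  | succ n ih =>
    rw [iterate_succ_apply', iterate_succ_apply' f (n + 1)]
    exact hf (hmaps.iterate n ⟨le_rfl, haM⟩) (hmaps.iterate (n + 1) ⟨le_rfl, haM⟩) ih

theorem exists_tendsto_iterate_isFixedPt_lt {α : Type*} [ConditionallyCompleteLinearOrder α]
    [TopologicalSpace α] [OrderTopology α] {f : α → α} {a M : α}
    (hf : MonotoneOn f (Icc a M)) (hfc : Continuous f) (ha : a ≤ f a) (hM : f M < M)
    (haM : a ≤ M) :
    ∃ L ∈ Ico a M, Tendsto (fun n => f^[n] a) atTop (𝓝 L) ∧ IsFixedPt f L := by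
  have hmaps : MapsTo f (Icc a M) (Icc a M) := fun x hx =>
    ⟨ha.trans (hf ⟨le_rfl, haM⟩ hx hx.1), (hf hx ⟨haM, le_rfl⟩ hx.2).trans hM.le⟩
  have hmem : ∀ n, f^[n] a ∈ Icc a M := fun n => hmaps.iterate n ⟨le_rfl, haM⟩
  have hlim : Tendsto (fun n => f^[n] a) atTop (𝓝 (⨆ n, f^[n] a)) :=
    tendsto_atTop_ciSup (monotone_iterate_of_monotoneOn_Icc hf hmaps haM ha)
      ⟨M, forall_mem_range.2 fun n => (hmem n).2⟩
  set L := ⨆ n, f^[n] a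
  have hL : L ∈ Icc a M := isClosed_Icc.mem_of_tendsto hlim (Eventually.of_forall hmem)
  have hfix : IsFixedPt f L := isFixedPt_of_tendsto_iterate hlim hfc.continuousAt
  refine ⟨L, ⟨hL.1, hL.2.lt_of_ne ?_⟩, hlim, hfix⟩
  rintro rfl
  exact hM.ne hfix

noncomputable def expPowMap (C₁ C₂ l x : ℝ) : ℝ := C₁ * exp (C₂ * x ^ l / l)

section ExpPowMap

variable {C₁ C₂ l : ℝ}

theorem continuous_expPowMap (hl : 0 ≤ l) : Continuous (expPowMap C₁ C₂ l) := by
  have := continuous_rpow_const hl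
  unfold expPowMap
  fun_prop

theorem monotoneOn_expPowMap (hC₁ : 0 ≤ C₁) (hC₂ : 0 ≤ C₂) (hl : 0 ≤ l) :
    MonotoneOn (expPowMap C₁ C₂ l) (Ici 0) := fun x hx y _ hxy => by
  unfold expPowMap
  gcongr

theorem expPowMap_nonneg (hC₁ : 0 ≤ C₁) (x : ℝ) : 0 ≤ expPowMap C₁ C₂ l x := by
  unfold expPowMap
  positivity

theorem expPowMap_lt_self (hC₁ : 0 < C₁) (hC₂ : 0 < C₂) (hl : 0 < l)
    (hsmall : C₁ < (exp 1 * C₂) ^ (-(1 / l))) :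
    expPowMap C₁ C₂ l (C₁ * exp (1 / l)) < C₁ * exp (1 / l) := by
  have hpow : C₁ ^ l < (exp 1 * C₂)⁻¹ := by
    rwa [rpow_neg (by positivity), ← inv_rpow (by positivity), one_div,
      lt_rpow_inv_iff_of_pos hC₁.le (by positivity) hl] at hsmall
  have hMl : (C₁ * exp (1 / l)) ^ l = C₁ ^ l * exp 1 := by
    rw [mul_rpow hC₁.le (exp_pos _).le, ← exp_mul, one_div_mul_cancel hl.ne']
  have hkey : C₂ * (C₁ * exp (1 / l)) ^ l < 1 :=
    calc C₂ * (C₁ * exp (1 / l)) ^ l < C₂ * ((exp 1 * C₂)⁻¹ * exp 1) := by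
          rw [hMl]
          gcongr
      _ = 1 := by field_simp
  unfold expPowMap
  gcongr

end ExpPowMap

/-- For `Φ(x) = C₁ exp(C₂ x^l / l)` with `C₁, C₂ > 0`, `l ≥ 1`: if `C₁ < (e C₂)^{-1/l}`
then the fixed-point set `S = {x ≥ 0 : x = Φ(x)}` is nonempty with `inf S < C₁ e^{1/l}`,
and the sequence `B₀ = 0`, `B_{n+1} = Φ(B_n)` converges to a finite limit `B_∞ < C₁ e^{1/l}`. -/
theorem stmt_2 (C₁ C₂ l : ℝ) (hC₁ : 0 < C₁) (hC₂ : 0 < C₂) (hl : 1 ≤ l)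
    (Φ : ℝ → ℝ) (hΦ : ∀ x : ℝ, Φ x = C₁ * Real.exp (C₂ * x ^ l / l))
    (S : Set ℝ) (hS : S = {x : ℝ | 0 ≤ x ∧ x = Φ x})
    (B : ℕ → ℝ) (hB0 : B 0 = 0) (hB : ∀ n : ℕ, B (n + 1) = Φ (B n))
    (hsmall : C₁ < (Real.exp 1 * C₂) ^ (-(1 / l))) :
    S.Nonempty ∧ sInf S < C₁ * Real.exp (1 / l) ∧
    ∃ Binf : ℝ, Filter.Tendsto B Filter.atTop (nhds Binf) ∧
      Binf < C₁ * Real.exp (1 / l) := by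
  have hl₀ : 0 < l := one_pos.trans_le hl
  obtain rfl : Φ = expPowMap C₁ C₂ l := funext hΦ
  have hB_eq : B = fun n => (expPowMap C₁ C₂ l)^[n] 0 := funext fun n => by
    induction n with
    | zero => exact hB0
    | succ n ih => rw [hB, ih, iterate_succ_apply']
  obtain ⟨L, ⟨hL₀, hLM⟩, hlim, hfix⟩ := exists_tendsto_iterate_isFixedPt_lt
    ((monotoneOn_expPowMap hC₁.le hC₂.le hl₀.le).mono Icc_subset_Ici_self)
    (continuous_expPowMap hl₀.le) (expPowMap_nonneg hC₁.le 0)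
    (expPowMap_lt_self hC₁ hC₂ hl₀ hsmall) (by positivity)
  have hLS : L ∈ S := hS ▸ ⟨hL₀, hfix.symm⟩
  have hS_bdd : BddBelow S := ⟨0, fun x hx => (hS ▸ hx).1⟩
  exact ⟨⟨L, hLS⟩, (csInf_le hS_bdd hLS).trans_lt hLM, L, hB_eq ▸ hlim, hLM⟩
end

section
/- Let C₁ > 0, C₂ > 0 and l ≥ 1, and define Φ(x) = C₁·exp(C₂·x^l / l) for x ≥ 0. If the fixed-point set S = {x ≥ 0 : x = Φ(x)} consists of exactly one element x̃, then necessarily x̃ = C₁·e^{1/l} and C₁ = (e·C₂)^{−1/l}. -/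
/-! With `y = C₂ x ^ l`, a fixed point `x ≥ 0` of `Φ` satisfies `y e^{-y} = C₁ ^ l C₂`. Since
`y e^{-y} < e^{-1}` unless `y = 1`, a fixed point with `y ≠ 1` forces `C₁ ^ l C₂ < e^{-1}`, which
says exactly that `Φ(x₀) < x₀` at `x₀ = C₂ ^ (-1/l)`, the point where `y = 1`. As `Φ(0) ≥ 0` and
`Φ` eventually outgrows the identity, the intermediate value theorem then gives fixed points on
both sides of `x₀`, contradicting uniqueness. So the unique fixed point has `y = 1`, and the fixed
point equation and `y e^{-y} = C₁ ^ l C₂` at `y = 1` give the two formulas. -/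

open Real Filter Function

noncomputable def recursionMap (C₁ C₂ l x : ℝ) : ℝ := C₁ * exp (C₂ * x ^ l / l)

theorem exists_two_nonneg_isFixedPt {f : ℝ → ℝ} {c : ℝ} (hf : Continuous f) (hf0 : 0 ≤ f 0)
    (hc0 : 0 ≤ c) (hfc : f c < c) (htop : ∀ᶠ x in atTop, x ≤ f x) :
    ∃ a b, 0 ≤ a ∧ a < b ∧ IsFixedPt f a ∧ IsFixedPt f b := by
  have hg : Continuous fun x => f x - x := hf.sub continuous_id
  obtain ⟨a, ⟨ha0, hac⟩, ha⟩ : ∃ a ∈ Set.Icc 0 c, f a - a = 0 :=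
    intermediate_value_Icc' hc0 hg.continuousOn ⟨by linarith, by linarith⟩
  obtain ⟨V, hV⟩ := (htop.and (eventually_ge_atTop c)).exists
  obtain ⟨b, ⟨hcb, -⟩, hb⟩ : ∃ b ∈ Set.Icc c V, f b - b = 0 :=
    intermediate_value_Icc hV.2 hg.continuousOn ⟨by linarith, by linarith [hV.1]⟩
  have hne : ∀ x, f x - x = 0 → x ≠ c := by rintro x hx rfl; linarith
  exact ⟨a, b, ha0, (lt_of_le_of_ne hac (hne a ha)).trans_le hcb, sub_eq_zero.1 ha,
    sub_eq_zero.1 hb⟩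

theorem mul_exp_neg_lt_exp_neg_one {y : ℝ} (hy : y ≠ 1) : y * exp (-y) < exp (-1) := by
  have h : y < exp (y - 1) := by simpa using add_one_lt_exp (sub_ne_zero.2 hy)
  calc y * exp (-y) < exp (y - 1) * exp (-y) := by gcongr
    _ = exp (-1) := by rw [← exp_add]; ring_nf

section recursionMap

variable {C₁ C₂ l : ℝ}

theorem continuous_recursionMap (hl : 0 ≤ l) : Continuous (recursionMap C₁ C₂ l) := by
  have := continuous_rpow_const hl
  unfold recursionMap
  fun_prop

theorem recursionMap_nonneg (hC₁ : 0 ≤ C₁) (x : ℝ) : 0 ≤ recursionMap C₁ C₂ l x := by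
  unfold recursionMap; positivity

theorem eventually_le_recursionMap (hC₁ : 0 < C₁) (hC₂ : 0 < C₂) (hl : 0 < l) :
    ∀ᶠ x in atTop, x ≤ recursionMap C₁ C₂ l x := by
  -- With `y = x ^ l`, `exp (C₂ / l * y) / y ^ (1 / l) = recursionMap C₁ C₂ l x / (C₁ * x)`.
  have h := (tendsto_exp_mul_div_rpow_atTop (1 / l) (C₂ / l) (by positivity)).comp
    (tendsto_rpow_atTop hl)
  filter_upwards [h.eventually_ge_atTop C₁⁻¹, eventually_gt_atTop 0] with x hx hx0
  simp only [Function.comp_apply, ← rpow_mul hx0.le, mul_one_div_cancel hl.ne', rpow_one]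
    at hx
  rw [inv_le_iff_one_le_mul₀ hC₁, div_mul_eq_mul_div, one_le_div hx0] at hx
  calc x ≤ exp (C₂ / l * x ^ l) * C₁ := hx
    _ = recursionMap C₁ C₂ l x := by rw [recursionMap]; ring_nf

theorem mul_exp_neg_eq_of_isFixedPt (hC₁ : 0 ≤ C₁) (hl : l ≠ 0) {x : ℝ}
    (hx : IsFixedPt (recursionMap C₁ C₂ l) x) :
    C₂ * x ^ l * exp (-(C₂ * x ^ l)) = C₁ ^ l * C₂ := by
  have hxl : x ^ l = C₁ ^ l * exp (C₂ * x ^ l) := by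
    conv_lhs => rw [← hx.eq, recursionMap, mul_rpow hC₁ (exp_pos _).le, ← exp_mul,
      div_mul_cancel₀ _ hl]
  calc C₂ * x ^ l * exp (-(C₂ * x ^ l))
      = C₂ * (C₁ ^ l * exp (C₂ * x ^ l)) * exp (-(C₂ * x ^ l)) := by rw [← hxl]
    _ = C₁ ^ l * C₂ * (exp (C₂ * x ^ l) * exp (-(C₂ * x ^ l))) := by ring
    _ = C₁ ^ l * C₂ := by rw [← exp_add, add_neg_cancel, exp_zero, mul_one]

theorem recursionMap_lt_of_rpow_mul_lt (hC₁ : 0 ≤ C₁) (hC₂ : 0 < C₂) (hl : 0 < l)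
    (h : C₁ ^ l * C₂ < exp (-1)) :
    recursionMap C₁ C₂ l (C₂ ^ (-(1 / l))) < C₂ ^ (-(1 / l)) := by
  have hpow : (C₂ ^ (-(1 / l))) ^ l = C₂⁻¹ := by
    rw [← rpow_mul hC₂.le, neg_mul, one_div_mul_cancel hl.ne', rpow_neg_one]
  rw [recursionMap, hpow, mul_inv_cancel₀ hC₂.ne',
    ← rpow_lt_rpow_iff (by positivity) (by positivity) hl, hpow,
    mul_rpow hC₁ (exp_pos _).le, ← exp_mul, one_div_mul_cancel hl.ne']
  calc C₁ ^ l * exp 1 = C₁ ^ l * C₂ * exp 1 * C₂⁻¹ := by field_simp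
    _ < exp (-1) * exp 1 * C₂⁻¹ := by gcongr
    _ = C₂⁻¹ := by rw [← exp_add, neg_add_cancel, exp_zero, one_mul]

end recursionMap

theorem eq_rpow_neg_one_div_of_rpow_mul_eq {a b l : ℝ} (ha : 0 ≤ a) (hb : 0 < b) (hl : l ≠ 0)
    (h : a ^ l * b = exp (-1)) : a = (exp 1 * b) ^ (-(1 / l)) := by
  have hal : a ^ l = (exp 1 * b)⁻¹ := by
    rw [mul_inv, ← exp_neg, ← h, mul_inv_cancel_right₀ hb.ne']
  rw [rpow_neg (by positivity), ← inv_rpow (by positivity), one_div,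
    eq_rpow_inv ha (by positivity) hl, hal]

/-- For `Φ(x) = C₁ exp(C₂ x^l / l)` with `C₁, C₂ > 0`, `l ≥ 1`: if the fixed-point set
`{x ≥ 0 : x = Φ(x)}` consists of exactly one element `x̃`, then `x̃ = C₁ e^{1/l}` and
`C₁ = (e C₂)^{-1/l}`. -/
theorem stmt_3 (C₁ C₂ l : ℝ) (hC₁ : 0 < C₁) (hC₂ : 0 < C₂) (hl : 1 ≤ l)
    (Φ : ℝ → ℝ) (hΦ : ∀ x : ℝ, Φ x = C₁ * Real.exp (C₂ * x ^ l / l))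
    (xt : ℝ) (hunique : {x : ℝ | 0 ≤ x ∧ x = Φ x} = {xt}) :
    xt = C₁ * Real.exp (1 / l) ∧ C₁ = (Real.exp 1 * C₂) ^ (-(1 / l)) := by
  have hl0 : 0 < l := by linarith
  obtain rfl : Φ = recursionMap C₁ C₂ l := funext hΦ
  have hfixedPt_iff (x : ℝ) : 0 ≤ x ∧ IsFixedPt (recursionMap C₁ C₂ l) x ↔ x = xt := by
    rw [← Set.mem_singleton_iff (a := x), ← hunique]
    exact and_congr_right' eq_comm
  have hxt := ((hfixedPt_iff xt).2 rfl).2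
  have htangent : C₂ * xt ^ l = 1 := by
    by_contra hne
    have hsmall : C₁ ^ l * C₂ < exp (-1) := by
      rw [← mul_exp_neg_eq_of_isFixedPt hC₁.le hl0.ne' hxt]
      exact mul_exp_neg_lt_exp_neg_one hne
    obtain ⟨a, b, ha0, hab, ha, hb⟩ := exists_two_nonneg_isFixedPt
      (continuous_recursionMap hl0.le) (recursionMap_nonneg hC₁.le 0) (by positivity)
      (recursionMap_lt_of_rpow_mul_lt hC₁.le hC₂ hl0 hsmall)
      (eventually_le_recursionMap hC₁ hC₂ hl0)
    exact hab.ne (((hfixedPt_iff a).1 ⟨ha0, ha⟩).trans ((hfixedPt_iff b).1 ⟨ha0.trans hab.le, hb⟩).symm)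
  refine ⟨?_, eq_rpow_neg_one_div_of_rpow_mul_eq hC₁.le hC₂ hl0.ne' ?_⟩
  · rw [← htangent]
    exact hxt.eq.symm
  · simpa [htangent] using (mul_exp_neg_eq_of_isFixedPt hC₁.le hl0.ne' hxt).symm
end

section
/- Let φ : [0,∞) → [0,∞) be a continuous increasing function and let C ≥ 0, M_σ ≥ 0, K_g ≥ 0, K_{f,x} ≥ 0, K_{f,y} ≥ 0, K_b ≥ 0, K_σ ≥ 0, K_{f,z} ≥ 0 be constants. For T > 0 define Ψ_T(x) = 1 + C·exp(K_{f,y}T)·M_σ·(K_g + K_{f,x}T)·exp( K_σ²T + (K_b + K_σ(K_{f,z} + 2φ(x)))²·T² ). Then there exists T₀ > 0 such that for every T ∈ (0, T₀], the map Ψ_T has at least one fixed point in (0,∞), and the set of its fixed points in [0,∞) has a smallest element. -/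
/-!
At `T = 0` the map is constant, `Ψ_0 ≡ 1 + C M_σ K_g`, so `b := 2 + C M_σ K_g` satisfies
`Ψ_0(b) < b`; by continuity in `T` this persists for small `T > 0`. Since `Ψ_T ≥ 1`, the
intermediate value theorem gives a fixed point in `[1, b]`. The fixed points in `[0, ∞)` of the
continuous map `Ψ_T` form a closed set bounded below, so a nonempty one has a least element.
-/

open Set Filter Topology Function

section FixedPoints

variable {α : Type*} [ConditionallyCompleteLinearOrder α] [TopologicalSpace α] [OrderTopology α]

theorem ContinuousOn.exists_isLeast_fixedPt_Ici {f : α → α} {a : α}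
    (hf : ContinuousOn f (Ici a)) (hne : ∃ x, a ≤ x ∧ f x = x) :
    ∃ m, IsLeast {x | a ≤ x ∧ f x = x} m := by
  have hclosed : IsClosed {x | a ≤ x ∧ f x = x} :=
    (hf.prodMk continuousOn_id).preimage_isClosed_of_isClosed isClosed_Ici isClosed_diagonal
  exact ⟨_, hclosed.isLeast_csInf hne ⟨a, fun _ hx => hx.1⟩⟩

variable [DenselyOrdered α]

theorem exists_pos_forall_Ioc_exists_mem_Icc_isFixedPt {Ψ : ℝ → α → α} {a b : α} (hab : a ≤ b)
    (hcont : ∀ T > 0, ContinuousOn (Ψ T) (Icc a b)) (ha : ∀ T > 0, a ≤ Ψ T a)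
    (hb : ContinuousAt (fun T => Ψ T b) 0) (hb₀ : Ψ 0 b < b) :
    ∃ T₀ > 0, ∀ T ∈ Ioc 0 T₀, ∃ x ∈ Icc a b, IsFixedPt (Ψ T) x := by
  have hsmall : ∀ᶠ T in 𝓝[>] 0, Ψ T b < b :=
    nhdsWithin_le_nhds (hb.eventually_lt continuousAt_const hb₀)
  obtain ⟨T₀, hT₀, hsub⟩ := mem_nhdsGT_iff_exists_Ioc_subset.1 hsmall
  refine ⟨T₀, hT₀, fun T hT => ?_⟩
  exact exists_mem_Icc_isFixedPt (hcont T hT.1) hab (ha T hT.1) (hsub hT).le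

end FixedPoints

theorem stmt_12_general (φ : ℝ → ℝ) (hφc : ContinuousOn φ (Set.Ici 0))
    (C Mσ Kg Kfx Kfy Kb Kσ Kfz : ℝ)
    (hC : 0 ≤ C) (hMσ : 0 ≤ Mσ) (hKg : 0 ≤ Kg) (hKfx : 0 ≤ Kfx)
    (Ψ : ℝ → ℝ → ℝ)
    (hΨ : ∀ T x : ℝ, Ψ T x = 1 + C * Real.exp (Kfy * T) * Mσ * (Kg + Kfx * T) *
        Real.exp (Kσ ^ 2 * T + (Kb + Kσ * (Kfz + 2 * φ x)) ^ 2 * T ^ 2)) :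
    ∃ T₀ : ℝ, 0 < T₀ ∧ ∀ T : ℝ, 0 < T → T ≤ T₀ →
      (∃ x : ℝ, 0 < x ∧ Ψ T x = x) ∧
      (∃ m : ℝ, IsLeast {x : ℝ | 0 ≤ x ∧ Ψ T x = x} m) := by
  set b := 2 + C * Mσ * Kg
  have hb₁ : 1 ≤ b := le_add_of_le_of_nonneg one_le_two (by positivity)
  have hone : ∀ T > 0, ∀ x, 1 ≤ Ψ T x := fun T hT x => by
    rw [hΨ]
    have hT' : 0 ≤ T := hT.le
    exact le_add_of_nonneg_right (by positivity)
  have hcont : ∀ T, ContinuousOn (Ψ T) (Ici 0) := fun T => by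
    rw [show Ψ T = _ from funext (hΨ T)]
    fun_prop
  have hb : ContinuousAt (fun T => Ψ T b) 0 := by
    simp only [hΨ]
    fun_prop
  have hb₀ : Ψ 0 b < b := by
    simp only [hΨ, mul_zero, add_zero, Real.exp_zero, mul_one, zero_pow two_ne_zero]
    linarith
  obtain ⟨T₀, hT₀, hfix⟩ := exists_pos_forall_Ioc_exists_mem_Icc_isFixedPt
    hb₁ (fun T _ => (hcont T).mono fun x hx => zero_le_one.trans hx.1)
    (fun T hT => hone T hT 1) hb hb₀
  refine ⟨T₀, hT₀, fun T hT hTle => ?_⟩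
  obtain ⟨x, hx, hΨx⟩ := hfix T ⟨hT, hTle⟩
  exact ⟨⟨x, one_pos.trans_le hx.1, hΨx⟩,
    (hcont T).exists_isLeast_fixedPt_Ici ⟨x, zero_le_one.trans hx.1, hΨx⟩⟩

/-- For `Ψ_T(x) = 1 + C e^{K_{f,y} T} M_σ (K_g + K_{f,x} T)
exp(K_σ² T + (K_b + K_σ (K_{f,z} + 2 φ(x)))² T²)` with `φ : [0,∞) → [0,∞)` continuous
and increasing, there exists `T₀ > 0` such that for every `T ∈ (0, T₀]` the map `Ψ_T`
has a fixed point in `(0,∞)`, and its set of fixed points in `[0,∞)` has a smallest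
element. -/
theorem stmt_12 (φ : ℝ → ℝ) (hφc : ContinuousOn φ (Set.Ici 0))
    (hφm : MonotoneOn φ (Set.Ici 0)) (hφ0 : ∀ x : ℝ, 0 ≤ x → 0 ≤ φ x)
    (C Mσ Kg Kfx Kfy Kb Kσ Kfz : ℝ)
    (hC : 0 ≤ C) (hMσ : 0 ≤ Mσ) (hKg : 0 ≤ Kg) (hKfx : 0 ≤ Kfx) (hKfy : 0 ≤ Kfy)
    (hKb : 0 ≤ Kb) (hKσ : 0 ≤ Kσ) (hKfz : 0 ≤ Kfz)
    (Ψ : ℝ → ℝ → ℝ)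
    (hΨ : ∀ T x : ℝ, Ψ T x = 1 + C * Real.exp (Kfy * T) * Mσ * (Kg + Kfx * T) *
        Real.exp (Kσ ^ 2 * T + (Kb + Kσ * (Kfz + 2 * φ x)) ^ 2 * T ^ 2)) :
    ∃ T₀ : ℝ, 0 < T₀ ∧ ∀ T : ℝ, 0 < T → T ≤ T₀ →
      (∃ x : ℝ, 0 < x ∧ Ψ T x = x) ∧
      (∃ m : ℝ, IsLeast {x : ℝ | 0 ≤ x ∧ Ψ T x = x} m) :=
  stmt_12_general φ hφc C Mσ Kg Kfx Kfy Kb Kσ Kfz hC hMσ hKg hKfx Ψ hΨ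
end
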